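/- arXiv:2303.07414 — 2 statements merged into one kernel-verified Lean document; each statement's English description precedes it below -/
import Mathlib

section
/- Let G be a graph and u, v, w three distinct vertices with uw not an edge of G. Then v lies on some weakly toll (u,w)-walk if and only if there exist vertices v_u ∈ N(u) and v_w ∈ N(w) such that the graph G − S(v_u, v_w) contains a connected component C with {v_u, v_w, v} ⊆ V(C), where S(v_u, v_w) = (N[u] \ {v_u}) ∪ (N[w] \ {v_w}). -/
/-!
Every interior vertex `x` of a weakly toll `(u,w)`-walk avoids `S(v_u, v_w)`, where `v_u` and
`v_w` are its second and penultimate vertices: if `x` were adjacent to `u` it would be `v_u`, and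
likewise for `w`. The walk can only return to `u` through `v_u` and to `w` through `v_w`, so
collapsing `u` onto `v_u` and `w` onto `v_w` turns it into a walk of `G - S(v_u, v_w)` through
`v_u`, `v_w` and `v`. Conversely, a walk `v_u ⇝ v ⇝ v_u ⇝ v_w` in `G - S(v_u, v_w)`, extended by
`u` and `w`, is weakly toll because no vertex of it other than `v_u` (resp. `v_w`) sees `u`
(resp. `w`).
-/

open SimpleGraph

variable {V : Type*}

/-- Closed neighborhood N[x]. -/
def closedNbhd (G : SimpleGraph V) (x : V) : Set V := insert x (G.neighborSet x)

/-- The true-twin class of `x`: vertices with the same closed neighborhood. -/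
def twinClass (G : SimpleGraph V) (x : V) : Set V :=
  {y | closedNbhd G y = closedNbhd G x}

/-- A weakly toll walk between distinct nonadjacent endpoints: the first endpoint is
adjacent only to the second vertex of the walk, and the last endpoint only to the
second-to-last vertex. -/
def IsWeaklyTollWalk (G : SimpleGraph V) {u w : V} (p : G.Walk u w) : Prop :=
  u ≠ w ∧ ¬ G.Adj u w ∧
  (∀ x ∈ p.support, G.Adj u x → x = p.getVert 1) ∧
  (∀ x ∈ p.support, G.Adj x w → x = p.getVert (p.length - 1))

/-- The weakly toll interval of a set. -/
def wtInterval (G : SimpleGraph V) (S : Set V) : Set V :=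
  S ∪ {x | ∃ u ∈ S, ∃ w ∈ S, ∃ p : G.Walk u w, IsWeaklyTollWalk G p ∧ x ∈ p.support}

/-- Weakly toll convex set. -/
def WTConvex (G : SimpleGraph V) (S : Set V) : Prop := wtInterval G S = S

/-- The weakly toll convex hull. -/
def wtHull (G : SimpleGraph V) (S : Set V) : Set V :=
  ⋂₀ {T : Set V | S ⊆ T ∧ WTConvex G T}

/-- The weakly toll interval number. -/
noncomputable def wtn (G : SimpleGraph V) [Fintype V] : ℕ :=
  sInf {n | ∃ S : Finset V, S.card = n ∧ wtInterval G ↑S = Set.univ}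

/-- The weakly toll hull number. -/
noncomputable def wth (G : SimpleGraph V) [Fintype V] : ℕ :=
  sInf {n | ∃ S : Finset V, S.card = n ∧ wtHull G ↑S = Set.univ}

/-- `S` separates some pair of vertices of `G`. -/
def IsSeparator (G : SimpleGraph V) (S : Set V) : Prop :=
  ∃ a, ∃ ha : a ∈ (Sᶜ : Set V), ∃ b, ∃ hb : b ∈ (Sᶜ : Set V),
    G.Reachable a b ∧ ¬ (G.induce (Sᶜ : Set V)).Reachable ⟨a, ha⟩ ⟨b, hb⟩

/-- A clique separator. -/
def IsCliqueSeparator (G : SimpleGraph V) (S : Set V) : Prop :=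
  G.IsClique S ∧ IsSeparator G S

/-- A graph is prime if it has no clique separator. -/
def IsPrime (G : SimpleGraph V) : Prop := ∀ S : Set V, ¬ IsCliqueSeparator G S

/-- Maximal prime subgraph (given by its vertex set). -/
def IsMPSubgraph (G : SimpleGraph V) (M : Set V) : Prop :=
  IsPrime (G.induce M) ∧ ∀ M' : Set V, M ⊆ M' → IsPrime (G.induce M') → M' = M

/-- Extremal mp-subgraph. -/
def IsExtremalMP (G : SimpleGraph V) (M : Set V) : Prop :=
  IsMPSubgraph G M ∧ ∃ M', IsMPSubgraph G M' ∧ M' ≠ M ∧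
    ∀ M'', IsMPSubgraph G M'' → M'' ≠ M → M ∩ M'' ⊆ M ∩ M'

/-- Vertices of `M` shared with another mp-subgraph. -/
def Sh (G : SimpleGraph V) (M : Set V) : Set V :=
  {v | v ∈ M ∧ ∃ M', IsMPSubgraph G M' ∧ M' ≠ M ∧ v ∈ M'}

/-- Vertices exclusive to `M`. -/
def Exc (G : SimpleGraph V) (M : Set V) : Set V := M \ Sh G M

/-- Induced path: a path with no chords. -/
def IsInducedPath (G : SimpleGraph V) {u v : V} (p : G.Walk u v) : Prop :=
  p.IsPath ∧ ∀ i j : ℕ, i + 1 < j → j ≤ p.length → ¬ G.Adj (p.getVert i) (p.getVert j)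

/-- Monophonic interval. -/
def monoInterval (G : SimpleGraph V) (S : Set V) : Set V :=
  S ∪ {x | ∃ u ∈ S, ∃ w ∈ S, ∃ p : G.Walk u w, IsInducedPath G p ∧ x ∈ p.support}

/-- Monophonically convex set. -/
def MonoConvex (G : SimpleGraph V) (S : Set V) : Prop := monoInterval G S = S

/-- Monophonic hull. -/
def monoHull (G : SimpleGraph V) (S : Set V) : Set V :=
  ⋂₀ {T : Set V | S ⊆ T ∧ MonoConvex G T}

namespace SimpleGraph

variable {G : SimpleGraph V}

/-- The separator `S(a, b) = (N[u] \ {a}) ∪ (N[w] \ {b})`. -/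
def wtSeparator (G : SimpleGraph V) (u w a b : V) : Set V :=
  (closedNbhd G u \ {a}) ∪ (closedNbhd G w \ {b})

lemma mem_closedNbhd_iff {u x : V} : x ∈ closedNbhd G u ↔ x = u ∨ G.Adj u x :=
  Set.mem_insert_iff

lemma mem_compl_wtSeparator_iff {u w a b x : V} :
    x ∈ (wtSeparator G u w a b)ᶜ ↔
      (x ∈ closedNbhd G u → x = a) ∧ (x ∈ closedNbhd G w → x = b) := by
  simp only [wtSeparator, Set.mem_compl_iff, Set.mem_union, Set.mem_sdiff,
    Set.mem_singleton_iff]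
  tauto

lemma Walk.reachable_induce_of_map {s : Set V} (f : V → V) {a b : V} (p : G.Walk a b)
    (hs : ∀ x ∈ p.support, f x ∈ s)
    (hstep : ∀ d ∈ p.darts, f d.fst = f d.snd ∨ G.Adj (f d.fst) (f d.snd))
    {x : V} (hx : x ∈ p.support) :
    (G.induce s).Reachable ⟨f a, hs a p.start_mem_support⟩ ⟨f x, hs x hx⟩ := by
  induction p with
  | nil =>
    obtain rfl := List.mem_singleton.mp hx
    rfl
  | @cons a c _ hac q ih =>
    rcases List.mem_cons.mp hx with rfl | hx
    · rfl
    have hfc : (G.induce s).Reachable ⟨f a, hs a (by simp)⟩ ⟨f c, hs c (by simp)⟩ := by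
      rcases hstep ⟨(a, c), hac⟩ (by simp) with heq | hadj
      · simp only [heq]; rfl
      · exact Adj.reachable (by simpa using hadj)
    exact hfc.trans <| ih (fun y hy => hs y (by simp [hy])) (fun d hd => hstep d (by simp [hd])) hx

namespace IsWeaklyTollWalk

variable {u w : V} {p : G.Walk u w}

lemma not_nil (hp : IsWeaklyTollWalk G p) : ¬ p.Nil :=
  fun h => hp.1 h.eq

lemma eq_snd_of_adj (hp : IsWeaklyTollWalk G p) {x : V} (hx : x ∈ p.support)
    (hux : G.Adj u x) : x = p.snd :=
  hp.2.2.1 x hx hux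

lemma eq_penultimate_of_adj (hp : IsWeaklyTollWalk G p) {x : V} (hx : x ∈ p.support)
    (hxw : G.Adj x w) : x = p.penultimate :=
  hp.2.2.2 x hx hxw

lemma snd_ne (hp : IsWeaklyTollWalk G p) : p.snd ≠ w :=
  fun h => hp.2.1 (h ▸ p.adj_snd hp.not_nil)

lemma penultimate_ne (hp : IsWeaklyTollWalk G p) : p.penultimate ≠ u :=
  fun h => hp.2.1 (h ▸ p.adj_penultimate hp.not_nil)

lemma mem_compl_wtSeparator (hp : IsWeaklyTollWalk G p) {x : V} (hx : x ∈ p.support)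
    (hxu : x ≠ u) (hxw : x ≠ w) : x ∈ (wtSeparator G u w p.snd p.penultimate)ᶜ := by
  rw [mem_compl_wtSeparator_iff, mem_closedNbhd_iff, mem_closedNbhd_iff]
  refine ⟨?_, ?_⟩
  · rintro (h | h)
    exacts [absurd h hxu, hp.eq_snd_of_adj hx h]
  · rintro (h | h)
    exacts [absurd h hxw, hp.eq_penultimate_of_adj hx h.symm]

lemma penultimate_mem_compl_wtSeparator (hp : IsWeaklyTollWalk G p) :
    p.penultimate ∈ (wtSeparator G u w p.snd p.penultimate)ᶜ :=
  hp.mem_compl_wtSeparator (p.getVert_mem_support _) hp.penultimate_ne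
    (p.adj_penultimate hp.not_nil).ne

lemma snd_mem_compl_wtSeparator (hp : IsWeaklyTollWalk G p) :
    p.snd ∈ (wtSeparator G u w p.snd p.penultimate)ᶜ :=
  hp.mem_compl_wtSeparator (p.getVert_mem_support 1) (p.adj_snd hp.not_nil).ne' hp.snd_ne

lemma reachable_snd (hp : IsWeaklyTollWalk G p) {x : V} (hx : x ∈ p.support)
    (hxu : x ≠ u) (hxw : x ≠ w) :
    (G.induce (wtSeparator G u w p.snd p.penultimate)ᶜ).Reachable
      ⟨p.snd, hp.snd_mem_compl_wtSeparator⟩ ⟨x, hp.mem_compl_wtSeparator hx hxu hxw⟩ := by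
  classical
  let f : V → V := fun y => if y = u then p.snd else if y = w then p.penultimate else y
  have hf_of_ne {y : V} (hyu : y ≠ u) (hyw : y ≠ w) : f y = y := by simp [f, hyu, hyw]
  have hf_snd : f p.snd = p.snd := by simp [f, hp.snd_ne]
  have hf_penultimate : f p.penultimate = p.penultimate := by simp [f, hp.penultimate_ne]
  have hf_mem {y : V} (hy : y ∈ p.support) :
      f y ∈ (wtSeparator G u w p.snd p.penultimate)ᶜ := by
    by_cases hyu : y = u
    · simpa [f, hyu] using hp.snd_mem_compl_wtSeparator
    by_cases hyw : y = w
    · simpa [f, hyw, Ne.symm hp.1] using hp.penultimate_mem_compl_wtSeparator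
    simpa [hf_of_ne hyu hyw] using hp.mem_compl_wtSeparator hy hyu hyw
  have hstep : ∀ d ∈ p.darts, f d.fst = f d.snd ∨ G.Adj (f d.fst) (f d.snd) := by
    intro d hd
    obtain ⟨⟨x, y⟩, hxy⟩ := d
    have hx := p.dart_fst_mem_support_of_mem_darts hd
    have hy := p.dart_snd_mem_support_of_mem_darts hd
    dsimp only at hxy hx hy ⊢
    have hwu : w ≠ u := Ne.symm hp.1
    by_cases hxu : x = u
    · left; simp [f, hxu, hp.eq_snd_of_adj hy (hxu ▸ hxy), hf_snd]
    by_cases hyu : y = u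
    · left; simp [f, hyu, hp.eq_snd_of_adj hx (hyu ▸ hxy.symm), hf_snd]
    by_cases hxw : x = w
    · left; simp [f, hxw, hwu, hp.eq_penultimate_of_adj hy (hxw ▸ hxy.symm), hf_penultimate]
    by_cases hyw : y = w
    · left; simp [f, hyw, hwu, hp.eq_penultimate_of_adj hx (hyw ▸ hxy), hf_penultimate]
    right; rwa [hf_of_ne hxu hxw, hf_of_ne hyu hyw]
  simpa [f, hxu, hxw] using p.reachable_induce_of_map f (fun y hy => hf_mem hy) hstep hx

end IsWeaklyTollWalk

lemma isWeaklyTollWalk_cons_concat {u w a b : V} (huw : u ≠ w) (hnadj : ¬ G.Adj u w)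
    (hua : G.Adj u a) (hbw : G.Adj b w) (q : G.Walk a b)
    (hq : ∀ x ∈ q.support, x ∈ (wtSeparator G u w a b)ᶜ) :
    IsWeaklyTollWalk G (Walk.cons hua (q.concat hbw)) := by
  have hsnd : (Walk.cons hua (q.concat hbw)).getVert 1 = a := Walk.snd_cons _ _
  have hpenultimate : (Walk.cons hua (q.concat hbw)).penultimate = b := by
    rw [Walk.penultimate_cons_of_not_nil _ _ (by simp [← Walk.length_eq_zero_iff]),
      Walk.penultimate_concat]
  refine ⟨huw, hnadj, fun x hx hux => ?_, fun x hx hxw => ?_⟩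
  all_goals
    simp only [Walk.support_cons, Walk.support_concat, List.mem_cons, List.mem_append,
      List.not_mem_nil, or_false] at hx
    rcases hx with rfl | hx | rfl
  · exact absurd hux G.irrefl
  · rw [hsnd]
    exact (mem_compl_wtSeparator_iff.mp (hq x hx)).1 (mem_closedNbhd_iff.mpr (.inr hux))
  · exact absurd hux hnadj
  · exact absurd hxw hnadj
  · rw [← Walk.penultimate, hpenultimate]
    exact (mem_compl_wtSeparator_iff.mp (hq x hx)).2 (mem_closedNbhd_iff.mpr (.inr hxw.symm))
  · exact absurd hxw G.irrefl

end SimpleGraph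

theorem stmt0_general (G : SimpleGraph V) (u v w : V)
    (huv : u ≠ v) (huw : u ≠ w) (hvw : v ≠ w) (hnadj : ¬ G.Adj u w) :
    (∃ p : G.Walk u w, IsWeaklyTollWalk G p ∧ v ∈ p.support) ↔
    ∃ vu ∈ G.neighborSet u, ∃ vw ∈ G.neighborSet w,
      ∃ (h1 : vu ∈ ((((closedNbhd G u) \ {vu}) ∪ ((closedNbhd G w) \ {vw}))ᶜ : Set V))
        (h2 : vw ∈ ((((closedNbhd G u) \ {vu}) ∪ ((closedNbhd G w) \ {vw}))ᶜ : Set V))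
        (h3 : v ∈ ((((closedNbhd G u) \ {vu}) ∪ ((closedNbhd G w) \ {vw}))ᶜ : Set V)),
        (G.induce ((((closedNbhd G u) \ {vu}) ∪ ((closedNbhd G w) \ {vw}))ᶜ : Set V)).Reachable
          ⟨vu, h1⟩ ⟨vw, h2⟩ ∧
        (G.induce ((((closedNbhd G u) \ {vu}) ∪ ((closedNbhd G w) \ {vw}))ᶜ : Set V)).Reachable
          ⟨vu, h1⟩ ⟨v, h3⟩ := by
  constructor
  · rintro ⟨p, hp, hv⟩
    exact ⟨p.snd, p.adj_snd hp.not_nil, p.penultimate, (p.adj_penultimate hp.not_nil).symm,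
      hp.snd_mem_compl_wtSeparator, hp.penultimate_mem_compl_wtSeparator,
      hp.mem_compl_wtSeparator hv huv.symm hvw,
      hp.reachable_snd (p.getVert_mem_support _) hp.penultimate_ne
        (p.adj_penultimate hp.not_nil).ne,
      hp.reachable_snd hv huv.symm hvw⟩
  · rintro ⟨vu, hu, vw, hw, h1, h2, h3, ⟨q⟩, ⟨r⟩⟩
    let inner := (r.append (r.reverse.append q)).map (Embedding.induce _).toHom
    have hinner : ∀ x ∈ inner.support, x ∈ (wtSeparator G u w vu vw)ᶜ := by
      simp only [inner, Walk.support_map, List.mem_map]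
      rintro _ ⟨y, -, rfl⟩
      exact y.2
    have hv : v ∈ inner.support := by
      simp only [inner, Walk.support_map]
      exact List.mem_map_of_mem ((Walk.mem_support_append_iff _ _).mpr (.inl r.end_mem_support))
    exact ⟨.cons hu (inner.concat hw.symm),
      isWeaklyTollWalk_cons_concat huw hnadj hu hw.symm inner hinner,
      List.mem_cons_of_mem _ (Walk.support_subset_support_concat _ _ hv)⟩

/-- characterization of vertices on weakly toll (u,w)-walks via
connected components after removing `S(v_u, v_w) = (N[u] \ {v_u}) ∪ (N[w] \ {v_w})`. -/
theorem stmt0 [Fintype V] [DecidableEq V] (G : SimpleGraph V) (u v w : V)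
    (huv : u ≠ v) (huw : u ≠ w) (hvw : v ≠ w) (hnadj : ¬ G.Adj u w) :
    (∃ p : G.Walk u w, IsWeaklyTollWalk G p ∧ v ∈ p.support) ↔
    ∃ vu ∈ G.neighborSet u, ∃ vw ∈ G.neighborSet w,
      ∃ (h1 : vu ∈ ((((closedNbhd G u) \ {vu}) ∪ ((closedNbhd G w) \ {vw}))ᶜ : Set V))
        (h2 : vw ∈ ((((closedNbhd G u) \ {vu}) ∪ ((closedNbhd G w) \ {vw}))ᶜ : Set V))
        (h3 : v ∈ ((((closedNbhd G u) \ {vu}) ∪ ((closedNbhd G w) \ {vw}))ᶜ : Set V)),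
        (G.induce ((((closedNbhd G u) \ {vu}) ∪ ((closedNbhd G w) \ {vw}))ᶜ : Set V)).Reachable
          ⟨vu, h1⟩ ⟨vw, h2⟩ ∧
        (G.induce ((((closedNbhd G u) \ {vu}) ∪ ((closedNbhd G w) \ {vw}))ᶜ : Set V)).Reachable
          ⟨vu, h1⟩ ⟨v, h3⟩ :=
  stmt0_general G u v w huv huw hvw hnadj
end

section
/- Let G be a connected non-complete graph and let u, v ∈ V(G) maximize |I(u,v)| over all pairs of vertices. Then every vertex of V(G) \ I(u,v) is adjacent to u or to v, and no vertex of V(G) \ I(u,v) is adjacent to both u and v. -/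
/-!
Two nonadjacent vertices of `G` are joined by a weakly toll walk (a shortest one), so
`|I(u, v)| ≥ 3`; hence `u` and `v` are nonadjacent and joined by a weakly toll walk, and a
common neighbour `y` of `u` and `v` lies on the weakly toll walk `u y v`.

Suppose `y ∉ I(u, v)` is adjacent to neither, and let `C` be the component of `y` among the
common non-neighbours of `u` and `v`. Inserting a detour `z → w → z` into a weakly toll walk
keeps it weakly toll when `w` is adjacent to neither endpoint, so no vertex of `C` lies in or
next to `I(u, v)`. A walk from `y` to `u` leaves `C` along an edge `ct` with `t` adjacent to
exactly one of `u`, `v`, say `u`. Then `y ⇝ c → t → u` avoids `N(v)`, and a shortest walk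
from `y` to `u` avoiding `N(v)`, followed by any weakly toll `u`–`v` walk, is a weakly toll
`y`–`v` walk. So `I(u, v) ∪ {y} ⊆ I(y, v)`, contradicting maximality.
-/

open SimpleGraph

variable {V : Type*}

namespace SimpleGraph.Walk

variable {G : SimpleGraph V} {a b c : V}

lemma snd_append_of_not_nil {p : G.Walk a b} (q : G.Walk b c) (hp : ¬p.Nil) :
    (p.append q).snd = p.snd := by
  cases p with
  | nil => exact absurd Nil.nil hp
  | cons h p => simp

lemma penultimate_append_of_not_nil (p : G.Walk a b) {q : G.Walk b c} (hq : ¬q.Nil) :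
    (p.append q).penultimate = q.penultimate := by
  induction p with
  | nil => rfl
  | cons h p ih =>
    rw [cons_append, penultimate_cons_of_not_nil _ _ (by simp [nil_append_iff, hq]), ih hq]

def HasTollEnds (p : G.Walk a b) : Prop :=
  (∀ x ∈ p.support, G.Adj a x → x = p.snd) ∧ (∀ x ∈ p.support, G.Adj x b → x = p.penultimate)

lemma adj_eq_snd_of_forall_length_le {S : Set V} {q : G.Walk a b}
    (hqS : ∀ x ∈ q.support, x ∈ S)
    (hmin : ∀ r : G.Walk a b, (∀ x ∈ r.support, x ∈ S) → q.length ≤ r.length)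
    {x : V} (hx : x ∈ q.support) (hax : G.Adj a x) : x = q.snd := by
  classical
  have hshort := hmin (cons hax (q.dropUntil x hx)) <| by
    simp only [support_cons, List.mem_cons]
    rintro z (rfl | hz)
    exacts [hqS _ q.start_mem_support, hqS z (q.support_dropUntil_subset_support hx hz)]
  have hsplit := congrArg length (q.take_spec hx)
  have htake : 0 < (q.takeUntil x hx).length :=
    Nat.pos_of_ne_zero fun h => hax.ne (eq_of_length_eq_zero h)
  rw [length_append] at hsplit
  rw [length_cons] at hshort
  have h1 : (q.takeUntil x hx).length = 1 := by omega
  simpa [h1] using (q.getVert_length_takeUntil hx).symm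

lemma exists_hasTollEnds (S : Set V) (p : G.Walk a b) (hp : ∀ x ∈ p.support, x ∈ S) :
    ∃ q : G.Walk a b, (∀ x ∈ q.support, x ∈ S) ∧ q.HasTollEnds := by
  obtain ⟨q, hqS, hmin⟩ := (measure fun q : G.Walk a b => q.length).wf.has_min
    {q | ∀ x ∈ q.support, x ∈ S} ⟨p, hp⟩
  have hmin' : ∀ r : G.Walk a b, (∀ x ∈ r.support, x ∈ S) → q.length ≤ r.length :=
    fun r hr => not_lt.mp (hmin r hr)
  refine ⟨q, hqS, fun x hx hax => adj_eq_snd_of_forall_length_le hqS hmin' hx hax,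
    fun x hx hxb => ?_⟩
  -- the reversed walk is just as short
  rw [← snd_reverse]
  refine adj_eq_snd_of_forall_length_le (by simpa using hqS) (fun r hr => ?_)
    (by simpa using hx) hxb.symm
  simpa using hmin' r.reverse (by simpa using hr)

end SimpleGraph.Walk

open Walk

section WeaklyToll

variable {G : SimpleGraph V} {u v w y : V}

lemma IsWeaklyTollWalk.reverse {p : G.Walk u v} (hp : IsWeaklyTollWalk G p) :
    IsWeaklyTollWalk G p.reverse := by
  obtain ⟨hne, hna, hu, hv⟩ := hp
  refine ⟨hne.symm, fun h => hna h.symm, fun x hx hvx => ?_, fun x hx hxu => ?_⟩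
  · show x = p.reverse.snd
    rw [snd_reverse]
    exact hv x (by simpa using hx) hvx.symm
  · show x = p.reverse.penultimate
    rw [penultimate_reverse]
    exact hu x (by simpa using hx) hxu.symm

lemma isWeaklyTollWalk_cons_cons {t : V} (huv : u ≠ v) (hnuv : ¬ G.Adj u v) (hut : G.Adj u t)
    (htv : G.Adj t v) : IsWeaklyTollWalk G (cons hut (cons htv nil)) := by
  refine ⟨huv, hnuv, fun x hx hux => ?_, fun x hx hxv => ?_⟩ <;>
    simp only [support_cons, support_nil, List.mem_cons,
      List.not_mem_nil, or_false] at hx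
  · rcases hx with rfl | rfl | rfl
    exacts [absurd hux G.irrefl, rfl, absurd hux hnuv]
  · rcases hx with rfl | rfl | rfl
    exacts [absurd hxv hnuv, rfl, absurd hxv G.irrefl]

lemma IsWeaklyTollWalk.exists_mem_support_of_adj {p : G.Walk u v} (hp : IsWeaklyTollWalk G p)
    {z : V} (hz : z ∈ p.support) (hzw : G.Adj z w) (huw : ¬ G.Adj u w) (hvw : ¬ G.Adj v w) :
    ∃ q : G.Walk u v, IsWeaklyTollWalk G q ∧ w ∈ q.support := by
  classical
  obtain ⟨hne, hna, hu, hv⟩ := hp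
  have hT : ¬ (p.takeUntil z hz).Nil := not_nil_of_ne (by rintro rfl; exact huw hzw)
  have hD : ¬ (p.dropUntil z hz).Nil := not_nil_of_ne (by rintro rfl; exact hvw hzw)
  set q := (p.takeUntil z hz).append (cons hzw (cons hzw.symm (p.dropUntil z hz)))
  have hsnd : q.snd = p.snd := by
    conv_rhs => rw [← p.take_spec hz]
    rw [snd_append_of_not_nil _ hT, snd_append_of_not_nil _ hT]
  have hpen : q.penultimate = p.penultimate := by
    conv_rhs => rw [← p.take_spec hz]
    rw [penultimate_append_of_not_nil _ not_nil_cons,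
      penultimate_cons_of_not_nil _ _ not_nil_cons, penultimate_cons_of_not_nil _ _ hD,
      penultimate_append_of_not_nil _ hD]
  have hsupp : ∀ x ∈ q.support, x ∈ p.support ∨ x = w := by
    intro x hx
    simp only [q, mem_support_append_iff, support_cons, List.mem_cons] at hx
    rcases hx with hx | rfl | rfl | hx
    · exact Or.inl (p.support_takeUntil_subset_support hz hx)
    · exact Or.inl hz
    · exact Or.inr rfl
    · exact Or.inl (p.support_dropUntil_subset_support hz hx)
  refine ⟨q, ⟨hne, hna, fun x hx hux => ?_, fun x hx hxv => ?_⟩, by simp [q]⟩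
  · rcases hsupp x hx with hx | rfl
    exacts [(hu x hx hux).trans hsnd.symm, absurd hux huw]
  · rcases hsupp x hx with hx | rfl
    exacts [(hv x hx hxv).trans hpen.symm, absurd hxv.symm hvw]

lemma IsWeaklyTollWalk.append_left {Q : G.Walk y u} {p : G.Walk u v}
    (hp : IsWeaklyTollWalk G p) (hyv : y ≠ v) (hQ : ¬ Q.Nil)
    (hQy : ∀ x ∈ Q.support, G.Adj y x → x = Q.snd) (hQv : ∀ x ∈ Q.support, ¬ G.Adj x v)
    (hyp : ∀ x ∈ p.support, ¬ G.Adj y x) : IsWeaklyTollWalk G (Q.append p) := by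
  have hpnil : ¬ p.Nil := not_nil_of_ne hp.1
  refine ⟨hyv, hQv y Q.start_mem_support, fun x hx hyx => ?_, fun x hx hxv => ?_⟩
  · show x = (Q.append p).snd
    rw [snd_append_of_not_nil _ hQ]
    rcases (mem_support_append_iff Q p).mp hx with hx | hx
    exacts [hQy x hx hyx, absurd hyx (hyp x hx)]
  · show x = (Q.append p).penultimate
    rw [penultimate_append_of_not_nil _ hpnil]
    rcases (mem_support_append_iff Q p).mp hx with hx | hx
    exacts [absurd hxv (hQv x hx), hp.2.2.2 x hx hxv]

end WeaklyToll

section Interval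

variable {G : SimpleGraph V} {a b u v w y : V}

lemma mem_wtInterval_pair_iff {x : V} :
    x ∈ wtInterval G {u, v} ↔
      x = u ∨ x = v ∨ ∃ p : G.Walk u v, IsWeaklyTollWalk G p ∧ x ∈ p.support := by
  constructor
  · rintro (hx | ⟨a, ha, b, hb, p, hp, hx⟩)
    · rcases hx with rfl | rfl
      exacts [Or.inl rfl, Or.inr (Or.inl rfl)]
    · rcases ha with rfl | rfl <;> rcases hb with rfl | rfl
      · exact absurd rfl hp.1
      · exact Or.inr (Or.inr ⟨p, hp, hx⟩)
      · exact Or.inr (Or.inr ⟨p.reverse, hp.reverse, by simpa using hx⟩)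
      · exact absurd rfl hp.1
  · rintro (rfl | rfl | ⟨p, hp, hx⟩)
    · exact Or.inl (by simp)
    · exact Or.inl (by simp)
    · exact Or.inr ⟨_, by simp, _, by simp, p, hp, hx⟩

lemma exists_isWeaklyTollWalk_of_two_lt_ncard (h : 2 < (wtInterval G {u, v}).ncard) :
    ∃ p : G.Walk u v, IsWeaklyTollWalk G p := by
  by_contra! hno
  have hsub : wtInterval G {u, v} ⊆ {u, v} := fun x hx => by
    rcases mem_wtInterval_pair_iff.mp hx with rfl | rfl | ⟨p, hp, -⟩
    exacts [by simp, by simp, absurd hp (hno p)]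
  have hle : (wtInterval G {u, v}).ncard ≤ 2 :=
    (Set.ncard_le_ncard hsub).trans ((Set.ncard_insert_le _ _).trans (by simp))
  omega

lemma two_lt_ncard_wtInterval [Finite V] (hab : a ≠ b) (hnab : ¬ G.Adj a b)
    (hr : G.Reachable a b) : 2 < (wtInterval G {a, b}).ncard := by
  obtain ⟨p⟩ := hr
  obtain ⟨q, -, hq⟩ := p.exists_hasTollEnds Set.univ fun _ _ => trivial
  have hsnd : G.Adj a q.snd := adj_snd (not_nil_of_ne hab)
  rw [← Set.ncard_pair hab]
  refine Set.ncard_lt_ncard ((Set.ssubset_iff_of_subset fun x hx => Or.inl hx).mpr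
    ⟨q.snd, mem_wtInterval_pair_iff.mpr (Or.inr (Or.inr ⟨q, ⟨hab, hnab, hq⟩,
      q.getVert_mem_support 1⟩)), ?_⟩)
  rintro (h | h)
  exacts [hsnd.ne h.symm, hnab (h ▸ hsnd)]

lemma mem_wtInterval_of_adj_of_adj {t : V} (huv : u ≠ v) (hnuv : ¬ G.Adj u v) (hut : G.Adj u t)
    (htv : G.Adj t v) : t ∈ wtInterval G {u, v} :=
  mem_wtInterval_pair_iff.mpr
    (Or.inr (Or.inr ⟨_, isWeaklyTollWalk_cons_cons huv hnuv hut htv, by simp⟩))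

lemma mem_wtInterval_of_adj {x : V} (hx : x ∈ wtInterval G {u, v}) (hxw : G.Adj x w)
    (huw : ¬ G.Adj u w) (hvw : ¬ G.Adj v w) : w ∈ wtInterval G {u, v} := by
  rcases mem_wtInterval_pair_iff.mp hx with rfl | rfl | ⟨p, hp, hxp⟩
  · exact absurd hxw huw
  · exact absurd hxw hvw
  · obtain ⟨q, hq, hwq⟩ := hp.exists_mem_support_of_adj hxp hxw huw hvw
    exact mem_wtInterval_pair_iff.mpr (Or.inr (Or.inr ⟨q, hq, hwq⟩))

lemma mem_wtInterval_of_walk {x : V} (p : G.Walk w x)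
    (hp : ∀ z ∈ p.support, ¬ G.Adj u z ∧ ¬ G.Adj v z) (hx : x ∈ wtInterval G {u, v}) :
    w ∈ wtInterval G {u, v} := by
  induction p with
  | nil => exact hx
  | cons h p ih =>
    have hw := hp _ (start_mem_support _)
    exact mem_wtInterval_of_adj (ih (fun z hz => hp z (by simp [hz])) hx) h.symm hw.1 hw.2

lemma not_adj_of_walk_of_notMem_wtInterval {c : V} (hy : y ∉ wtInterval G {u, v})
    (p : G.Walk y c) (hp : ∀ z ∈ p.support, ¬ G.Adj u z ∧ ¬ G.Adj v z) :
    ∀ x ∈ wtInterval G {u, v}, ¬ G.Adj c x := fun x hx hcx => by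
  have hc := hp c p.end_mem_support
  exact hy (mem_wtInterval_of_walk p hp (mem_wtInterval_of_adj hx hcx.symm hc.1 hc.2))

lemma ncard_wtInterval_lt_of_walk [Finite V] (hW : ∃ p : G.Walk u v, IsWeaklyTollWalk G p)
    (Q : G.Walk y u) (hQ : ∀ x ∈ Q.support, ¬ G.Adj x v) (hy : y ∉ wtInterval G {u, v})
    (hyI : ∀ x ∈ wtInterval G {u, v}, ¬ G.Adj y x) :
    (wtInterval G {u, v}).ncard < (wtInterval G {y, v}).ncard := by
  obtain ⟨Q, hQv, hQy, -⟩ := Q.exists_hasTollEnds {x | ¬ G.Adj x v} hQ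
  have hyu : y ≠ u := fun h => hy (mem_wtInterval_pair_iff.mpr (Or.inl h))
  have hyv : y ≠ v := fun h => hy (mem_wtInterval_pair_iff.mpr (Or.inr (Or.inl h)))
  have hmem : ∀ p : G.Walk u v, IsWeaklyTollWalk G p → ∀ x ∈ p.support,
      x ∈ wtInterval G {y, v} := fun p hp x hx =>
    mem_wtInterval_pair_iff.mpr <| Or.inr <| Or.inr
      ⟨Q.append p, hp.append_left hyv (not_nil_of_ne hyu) hQy hQv fun z hz =>
        hyI z (mem_wtInterval_pair_iff.mpr (Or.inr (Or.inr ⟨p, hp, hz⟩))),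
        (mem_support_append_iff Q p).mpr (Or.inr hx)⟩
  obtain ⟨p₀, hp₀⟩ := hW
  have hsub : wtInterval G {u, v} ⊆ wtInterval G {y, v} := fun x hx => by
    rcases mem_wtInterval_pair_iff.mp hx with rfl | rfl | ⟨p, hp, hxp⟩
    exacts [hmem p₀ hp₀ _ p₀.start_mem_support, hmem p₀ hp₀ _ p₀.end_mem_support,
      hmem p hp x hxp]
  exact Set.ncard_lt_ncard ((Set.ssubset_iff_of_subset hsub).mpr
    ⟨y, mem_wtInterval_pair_iff.mpr (Or.inl rfl), hy⟩)

lemma exists_ncard_wtInterval_lt [Finite V] (hconn : G.Connected)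
    (hW : ∃ p : G.Walk u v, IsWeaklyTollWalk G p) (hy : y ∉ wtInterval G {u, v})
    (huy : ¬ G.Adj u y) (hvy : ¬ G.Adj v y) :
    ∃ w z, (wtInterval G {u, v}).ncard < (wtInterval G {w, z}).ncard := by
  obtain ⟨p, hp⟩ := hW
  set C : Set V := {x | ∃ q : G.Walk y x, ∀ z ∈ q.support, ¬ G.Adj u z ∧ ¬ G.Adj v z}
  have hyC : y ∈ C := ⟨nil, by simpa using ⟨huy, hvy⟩⟩
  have huC : u ∉ C := fun ⟨q, hq⟩ =>
    hy (mem_wtInterval_of_walk q hq (mem_wtInterval_pair_iff.mpr (Or.inl rfl)))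
  obtain ⟨⟨⟨c, t⟩, hct⟩, -, ⟨pc, hpc⟩, htC⟩ :=
    (hconn.preconnected y u).some.exists_boundary_dart C hyC huC
  have hcI := not_adj_of_walk_of_notMem_wtInterval hy pc hpc
  have hyI := not_adj_of_walk_of_notMem_wtInterval hy nil (by simpa using ⟨huy, hvy⟩)
  have ht : G.Adj u t ∨ G.Adj v t := by
    by_contra! h
    refine htC ⟨pc.concat hct, fun z hz => ?_⟩
    rcases List.mem_append.mp ((support_concat pc hct) ▸ hz) with hz | hz
    exacts [hpc z hz, List.mem_singleton.mp hz ▸ h]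
  have hboth : ¬ (G.Adj u t ∧ G.Adj v t) := fun ⟨hut, hvt⟩ =>
    hcI t (mem_wtInterval_of_adj_of_adj hp.1 hp.2.1 hut hvt.symm) hct
  rcases ht with hut | hvt
  · refine ⟨y, v, ncard_wtInterval_lt_of_walk ⟨p, hp⟩
      (pc.append (cons hct (cons hut.symm nil))) ?_ hy hyI⟩
    simp only [mem_support_append_iff, support_cons, support_nil, List.mem_cons,
      List.not_mem_nil, or_false]
    rintro x (hx | rfl | rfl | rfl)
    exacts [fun h => (hpc x hx).2 h.symm, fun h => (hpc x pc.end_mem_support).2 h.symm,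
      fun h => hboth ⟨hut, h.symm⟩, hp.2.1]
  · rw [Set.pair_comm u v] at hy hyI ⊢
    refine ⟨y, u, ncard_wtInterval_lt_of_walk ⟨p.reverse, hp.reverse⟩
      (pc.append (cons hct (cons hvt.symm nil))) ?_ hy hyI⟩
    simp only [mem_support_append_iff, support_cons, support_nil, List.mem_cons,
      List.not_mem_nil, or_false]
    rintro x (hx | rfl | rfl | rfl)
    exacts [fun h => (hpc x hx).1 h.symm, fun h => (hpc x pc.end_mem_support).1 h.symm,
      fun h => hboth ⟨h.symm, hvt⟩, fun h => hp.2.1 h.symm]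

end Interval

/-- if `u,v` maximize the size of the weakly toll interval in a
connected non-complete graph, then every vertex outside `I(u,v)` is adjacent to
`u` or to `v`, but not to both. -/
theorem stmt11 [Fintype V] (G : SimpleGraph V) (hconn : G.Connected)
    (hnc : ∃ a b : V, a ≠ b ∧ ¬ G.Adj a b) (u v : V)
    (hmax : ∀ w z : V, (wtInterval G {w, z}).ncard ≤ (wtInterval G {u, v}).ncard) :
    ∀ y : V, y ∉ wtInterval G {u, v} →
      (G.Adj u y ∨ G.Adj v y) ∧ ¬ (G.Adj u y ∧ G.Adj v y) := by
  intro y hy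
  obtain ⟨a, b, hab, hnab⟩ := hnc
  obtain ⟨p, hp⟩ := exists_isWeaklyTollWalk_of_two_lt_ncard <|
    (two_lt_ncard_wtInterval hab hnab (hconn.preconnected a b)).trans_le (hmax a b)
  refine ⟨?_, fun ⟨huy, hvy⟩ => hy (mem_wtInterval_of_adj_of_adj hp.1 hp.2.1 huy hvy.symm)⟩
  by_contra! h
  obtain ⟨w, z, hlt⟩ := exists_ncard_wtInterval_lt hconn ⟨p, hp⟩ hy h.1 h.2
  exact (hmax w z).not_gt hlt
end
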